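/- Fix m ≥ 0. Then there exist constants C > 0 and R₀ > max(2m, 0) such that for all R ≥ R₀, the tail integral satisfies |4π ∫_R^∞ s² [ (1 + s² − 2m s^(−1))^(−1/2) − (1 + s²)^(−1/2) ] ds − (4πm R^(−1) − 2πm R^(−3))| ≤ C R^(−4). In particular the tail integral equals 4πm R^(−1) − 2πm R^(−3) + O(R^(−4)) as R → ∞. -/

import Mathlib

/-!
Put `u = √(1 + s² - 2m/s)` and `v = √(1 + s²)`, so that `s (v² - u²) = 2m` and `u, v ≥ s` once
`s ≥ 2m`. The integrand is `s² (1/u - 1/v) = 2ms / (uv(u + v))`, which differs from `ms / v³` by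
`2m²(2v + u) / (uv³(u + v)²) ∈ [0, 2m²/s⁵]`. Expanding `ms / v³ = m s⁻² (1 + s⁻²)^(-3/2)` gives
`m/s² - 3m/(2s⁴) + O(s⁻⁶)`. The two leading terms integrate over `(R, ∞)` to `m/R - m/(2R³)` and
the `O(s⁻⁵)` remainder to `O(R⁻⁴)`.
-/

open Real MeasureTheory Set

lemma integrableOn_Ioi_inv_pow {n : ℕ} (hn : 1 < n) {R : ℝ} (hR : 0 < R) :
    IntegrableOn (fun s : ℝ ↦ (s ^ n)⁻¹) (Ioi R) := by
  have h := integrableOn_Ioi_rpow_of_lt (a := -n) (neg_lt_neg (Nat.one_lt_cast.mpr hn)) hR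
  simpa [rpow_neg_natCast] using h

lemma integral_Ioi_inv_pow {n : ℕ} (hn : 1 < n) {R : ℝ} (hR : 0 < R) :
    ∫ s in Ioi R, (s ^ n)⁻¹ = (((n : ℝ) - 1) * R ^ (n - 1))⁻¹ := by
  have h := integral_Ioi_rpow_of_lt (a := -n) (neg_lt_neg (Nat.one_lt_cast.mpr hn)) hR
  have : -(n : ℝ) + 1 = -((n - 1 : ℕ) : ℝ) := by push_cast [Nat.cast_sub hn.le]; ring
  rw [this] at h
  simp only [rpow_neg_natCast, zpow_neg, zpow_natCast] at h
  rw [h, Nat.cast_sub hn.le]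
  field_simp
  ring

lemma integral_Ioi_inv_sq_sub_inv_pow_four (m : ℝ) {R : ℝ} (hR : 0 < R) :
    ∫ s in Ioi R, (m * (s ^ 2)⁻¹ - 3 * m / 2 * (s ^ 4)⁻¹) = m / R - m / (2 * R ^ 3) := by
  rw [integral_sub ((integrableOn_Ioi_inv_pow (by norm_num) hR).const_mul _)
      ((integrableOn_Ioi_inv_pow (by norm_num) hR).const_mul _),
    integral_const_mul, integral_const_mul, integral_Ioi_inv_pow (by norm_num) hR,
    integral_Ioi_inv_pow (by norm_num) hR]
  field_simp
  ring

lemma abs_integral_sub_integral_le {α : Type*} [MeasurableSpace α] {μ : Measure α}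
    {f g h : α → ℝ} (hf : AEStronglyMeasurable f μ) (hg : Integrable g μ) (hh : Integrable h μ)
    (hfg : ∀ᵐ x ∂μ, |f x - g x| ≤ h x) : |∫ x, f x ∂μ - ∫ x, g x ∂μ| ≤ ∫ x, h x ∂μ := by
  have hfg_int : Integrable (f - g) μ := hh.mono' (hf.sub hg.aestronglyMeasurable) hfg
  have hf_int : Integrable f μ := by simpa using hfg_int.add hg
  rw [← integral_sub hf_int hg]
  exact norm_integral_le_of_norm_le (f := fun x ↦ f x - g x) hh hfg

lemma abs_inv_sqrt_one_add_pow_three_sub_le {x : ℝ} (hx : 0 ≤ x) :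
    |(√(1 + x) ^ 3)⁻¹ - (1 - 3 * x / 2)| ≤ 15 / 8 * x ^ 2 := by
  set w := √(1 + x)
  have hw2 : w ^ 2 = 1 + x := sq_sqrt (by linarith)
  have hw1 : 1 ≤ w := one_le_sqrt.mpr (by linarith)
  have hx' : x = w ^ 2 - 1 := by linarith
  -- exact remainder of `(1 + x) ^ (-3/2) = 1 - 3x/2 + O(x²)`, in terms of `w = √(1 + x)`
  have key : (w ^ 3)⁻¹ - (1 - 3 * x / 2) =
      (w - 1) ^ 2 * (3 * w ^ 3 + 6 * w ^ 2 + 4 * w + 2) / (2 * w ^ 3) := by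
    rw [hx']; field_simp; ring
  have hsq : 4 * (w - 1) ^ 2 ≤ x ^ 2 := by rw [hx']; nlinarith
  have hcubic : 3 * w ^ 3 + 6 * w ^ 2 + 4 * w + 2 ≤ 15 * w ^ 3 := by nlinarith
  rw [key, abs_of_nonneg (by positivity), div_le_iff₀ (by positivity)]
  nlinarith [mul_le_mul hsq hcubic (by positivity) (by positivity), pow_pos (by linarith : 0 < w) 3]

lemma abs_div_sqrt_one_add_sq_pow_three_sub_le {s : ℝ} (hs : 0 < s) :
    |s / √(1 + s ^ 2) ^ 3 - (1 / s ^ 2 - 3 / (2 * s ^ 4))| ≤ 15 / (8 * s ^ 6) := by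
  have hv : √(1 + s ^ 2) = s * √(1 + (s ^ 2)⁻¹) := by
    rw [← sqrt_sq hs.le, ← sqrt_mul (sq_nonneg s), sqrt_sq hs.le]
    congr 1; field_simp; ring
  have hE := abs_inv_sqrt_one_add_pow_three_sub_le (inv_nonneg.mpr (sq_nonneg s))
  have key : s / √(1 + s ^ 2) ^ 3 - (1 / s ^ 2 - 3 / (2 * s ^ 4)) =
      (s ^ 2)⁻¹ * ((√(1 + (s ^ 2)⁻¹) ^ 3)⁻¹ - (1 - 3 * (s ^ 2)⁻¹ / 2)) := by
    rw [hv]; field_simp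
  rw [key, abs_mul, abs_of_pos (by positivity)]
  calc (s ^ 2)⁻¹ * |(√(1 + (s ^ 2)⁻¹) ^ 3)⁻¹ - (1 - 3 * (s ^ 2)⁻¹ / 2)|
      ≤ (s ^ 2)⁻¹ * (15 / 8 * ((s ^ 2)⁻¹) ^ 2) := by gcongr
    _ = 15 / (8 * s ^ 6) := by field_simp

lemma abs_sq_div_sqrt_sub_sq_div_sqrt_sub_le {m s : ℝ} (hs : 0 < s) (hms : 2 * m ≤ s) :
    |s ^ 2 / √(1 + s ^ 2 - 2 * m / s) - s ^ 2 / √(1 + s ^ 2) - m * s / √(1 + s ^ 2) ^ 3|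
      ≤ 2 * m ^ 2 / s ^ 5 := by
  have hms' : 2 * m / s ≤ 1 := (div_le_one hs).mpr hms
  set u := √(1 + s ^ 2 - 2 * m / s)
  set v := √(1 + s ^ 2)
  have hu2 : u ^ 2 = 1 + s ^ 2 - 2 * m / s := sq_sqrt (by nlinarith)
  have hv2 : v ^ 2 = 1 + s ^ 2 := sq_sqrt (by positivity)
  have hsu : s ≤ u := le_sqrt_of_sq_le (by linarith)
  have hsv : s ≤ v := le_sqrt_of_sq_le (by linarith)
  have hu : 0 < u := hs.trans_le hsu
  have hv : 0 < v := hs.trans_le hsv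
  have hm : m = s * (v ^ 2 - u ^ 2) / 2 := by rw [hu2, hv2]; field_simp; ring
  have key : s ^ 2 / u - s ^ 2 / v - m * s / v ^ 3 =
      2 * m ^ 2 * (2 * v + u) / (u * v ^ 3 * (u + v) ^ 2) := by
    clear_value u v; subst hm; field_simp; ring
  rw [key, abs_of_nonneg (by positivity)]
  calc 2 * m ^ 2 * (2 * v + u) / (u * v ^ 3 * (u + v) ^ 2)
      ≤ 2 * m ^ 2 * (2 * (u + v)) / (u * v ^ 3 * (u + v) ^ 2) := by gcongr; linarith
    _ = 4 * m ^ 2 / (u * v ^ 3 * (u + v)) := by field_simp; ring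
    _ ≤ 4 * m ^ 2 / (s * s ^ 3 * (s + s)) := by gcongr
    _ = 2 * m ^ 2 / s ^ 5 := by field_simp; ring

lemma abs_tail_integrand_sub_le {m s : ℝ} (hm : 0 ≤ m) (hs : 1 ≤ s) (hms : 2 * m ≤ s) :
    |s ^ 2 / √(1 + s ^ 2 - 2 * m / s) - s ^ 2 / √(1 + s ^ 2)
        - (m * (s ^ 2)⁻¹ - 3 * m / 2 * (s ^ 4)⁻¹)| ≤ (2 * m ^ 2 + 2 * m) * (s ^ 5)⁻¹ := by
  have hs0 : 0 < s := by linarith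
  have hmass := abs_sq_div_sqrt_sub_sq_div_sqrt_sub_le hs0 hms
  have hexp := abs_div_sqrt_one_add_sq_pow_three_sub_le hs0
  have hs65 : 15 / (8 * s ^ 6) ≤ 2 / s ^ 5 := by
    rw [div_le_div_iff₀ (by positivity) (by positivity)]
    nlinarith [pow_pos hs0 5]
  calc _ = |(s ^ 2 / √(1 + s ^ 2 - 2 * m / s) - s ^ 2 / √(1 + s ^ 2) - m * s / √(1 + s ^ 2) ^ 3)
        + m * (s / √(1 + s ^ 2) ^ 3 - (1 / s ^ 2 - 3 / (2 * s ^ 4)))| := by congr 1; ring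
    _ ≤ 2 * m ^ 2 / s ^ 5 + m * (2 / s ^ 5) := by
      refine (abs_add_le _ _).trans (add_le_add hmass ?_)
      rw [abs_mul, abs_of_nonneg hm]
      gcongr
      exact hexp.trans hs65
    _ = (2 * m ^ 2 + 2 * m) * (s ^ 5)⁻¹ := by ring

theorem tail_integral_expansion (m : ℝ) (hm : 0 ≤ m) :
    ∃ C > (0:ℝ), ∃ R₀ : ℝ, R₀ > 2 * m ∧ R₀ > 0 ∧ ∀ R ≥ R₀,
      |4 * π * (∫ s in Set.Ioi R,
            (s ^ 2 / Real.sqrt (1 + s ^ 2 - 2 * m / s) - s ^ 2 / Real.sqrt (1 + s ^ 2)))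
          - (4 * π * m / R - 2 * π * m / R ^ 3)| ≤ C / R ^ 4 := by
  refine ⟨π * (2 * m ^ 2 + 2 * m) + 1, by positivity, 2 * m + 1, by linarith, by linarith,
    fun R hR ↦ ?_⟩
  have hR0 : 0 < R := by linarith
  have hinv_pow : ∀ {n : ℕ}, 1 < n → IntegrableOn (fun s : ℝ ↦ (s ^ n)⁻¹) (Ioi R) :=
    fun hn ↦ integrableOn_Ioi_inv_pow hn hR0
  set I := ∫ s in Ioi R, (s ^ 2 / √(1 + s ^ 2 - 2 * m / s) - s ^ 2 / √(1 + s ^ 2))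
  have hrem := abs_integral_sub_integral_le (g := fun s ↦ m * (s ^ 2)⁻¹ - 3 * m / 2 * (s ^ 4)⁻¹)
    (by fun_prop)
    (((hinv_pow (by norm_num : 1 < 2)).const_mul m).sub
      ((hinv_pow (by norm_num : 1 < 4)).const_mul (3 * m / 2)))
    ((hinv_pow (by norm_num : 1 < 5)).const_mul (2 * m ^ 2 + 2 * m))
    ((ae_restrict_mem measurableSet_Ioi).mono fun s hs ↦
      abs_tail_integrand_sub_le hm (by linarith [mem_Ioi.mp hs]) (by linarith [mem_Ioi.mp hs]))
  rw [integral_Ioi_inv_sq_sub_inv_pow_four m hR0, integral_const_mul,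
    integral_Ioi_inv_pow (by norm_num) hR0] at hrem
  norm_num at hrem
  calc |4 * π * I - (4 * π * m / R - 2 * π * m / R ^ 3)|
      = 4 * π * |I - (m / R - m / (2 * R ^ 3))| := by
        rw [show 4 * π * I - (4 * π * m / R - 2 * π * m / R ^ 3)
          = 4 * π * (I - (m / R - m / (2 * R ^ 3))) by ring, abs_mul, abs_of_pos (by positivity)]
    _ ≤ 4 * π * ((2 * m ^ 2 + 2 * m) * ((R ^ 4)⁻¹ * (1 / 4))) := by gcongr
    _ = π * (2 * m ^ 2 + 2 * m) / R ^ 4 := by ring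
    _ ≤ (π * (2 * m ^ 2 + 2 * m) + 1) / R ^ 4 := by gcongr; linarith
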